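/- arXiv:1704.00467 — 2 statements merged into one kernel-verified Lean document; each statement's English description precedes it below -/
import Mathlib

section
/- Let p be a prime, r ≥ 1 an integer, and let a, b ∈ ℤ_p be units with a ≡ b (mod p^r ℤ_p). Let α ∈ ℤ_p be the unit root of X² − a·X + p (i.e. α² − a·α + p = 0 and α is a unit of ℤ_p) and let β ∈ ℤ_p be the unit root of X² − b·X + p. Then α ≡ β (mod p^r ℤ_p). -/
/-- Congruent traces `a ≡ b (mod p^r)` force congruent unit roots of the Frobenius
polynomials `X² - a·X + p` and `X² - b·X + p`. -/
theorem unit_roots_congruent (p : ℕ) [Fact p.Prime] (r : ℕ) (hr : 1 ≤ r)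
    (a b α β : ℤ_[p]) (ha : ‖a‖ = 1) (hb : ‖b‖ = 1)
    (hab : (p : ℤ_[p]) ^ r ∣ (a - b))
    (hα : α ^ 2 - a * α + (p : ℤ_[p]) = 0) (hαu : ‖α‖ = 1)
    (hβ : β ^ 2 - b * β + (p : ℤ_[p]) = 0) (hβu : ‖β‖ = 1) :
    (p : ℤ_[p]) ^ r ∣ (α - β) := by
  have key : (α - β) * (α + β - a) = (a - b) * β := by linear_combination hα - hβ
  have hpa : α * (α - a) = -(p : ℤ_[p]) := by linear_combination hα
  have hsmall : ‖α - a‖ < 1 := by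
    have h1 : ‖α * (α - a)‖ = ‖(p : ℤ_[p])‖ := by rw [hpa, norm_neg]
    rw [norm_mul, hαu, one_mul] at h1
    rw [h1]
    rw [PadicInt.norm_p]; exact inv_lt_one_of_one_lt₀ (by exact_mod_cast (Fact.out : p.Prime).one_lt)
  have hune : ‖β‖ ≠ ‖α - a‖ := by rw [hβu]; exact fun h => absurd h.symm (ne_of_lt hsmall)
  have hunorm : ‖α + β - a‖ = 1 := by
    have : α + β - a = β + (α - a) := by ring
    rw [this, PadicInt.norm_add_eq_max_of_ne hune, hβu]
    exact max_eq_left (le_of_lt (hβu ▸ hsmall))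
  have huu : IsUnit (α + β - a) := PadicInt.isUnit_iff.mpr hunorm
  have hdvd : (p : ℤ_[p]) ^ r ∣ (α - β) * (α + β - a) := key ▸ hab.mul_right β
  exact (IsUnit.dvd_mul_right huu).mp hdvd
end

section
/- Let p be a prime and let F = ∑_{n≥0} a_n T^n ∈ ℤ_p[[T]] be a nonzero power series. Then the set { x ∈ p ℤ_p : ∑_{n≥0} a_n x^n = 0 } is finite, where for x ∈ p ℤ_p the series ∑_{n≥0} a_n x^n converges in ℤ_p. -/
open Finset Filter
set_option maxHeartbeats 1000000

variable {p : ℕ} [Fact p.Prime]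

lemma padic_summable_aux (a : ℕ → ℤ_[p]) {x : ℤ_[p]} (hx : ‖x‖ < 1) :
    Summable (fun n => a n * x ^ n) := by
  apply Summable.of_norm_bounded (g := fun n => ‖x‖ ^ n)
    (summable_geometric_of_lt_one (norm_nonneg x) hx)
  intro n
  rw [norm_mul, norm_pow]
  exact mul_le_of_le_one_left (by positivity) (PadicInt.norm_le_one _)

lemma padic_tsum_split (a : ℕ → ℤ_[p]) {x : ℤ_[p]} (hx : ‖x‖ < 1) (k : ℕ) :
    ∑' n, a n * x ^ n
      = (∑ n ∈ range k, a n * x ^ n) + x ^ k * ∑' n, a (n + k) * x ^ n := by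
  rw [← Summable.sum_add_tsum_nat_add k (padic_summable_aux a hx)]
  congr 1
  rw [← ((padic_summable_aux (fun n => a (n + k)) hx)).tsum_mul_left (x ^ k)]
  exact tsum_congr fun n => by ring

lemma padic_coeff_eq_zero (a : ℕ → ℤ_[p])
    (h : ∀ x : ℤ_[p], ‖x‖ < 1 → ∑' n, a n * x ^ n = 0) : ∀ n, a n = 0 := by
  intro n
  induction n using Nat.strong_induction_on with
  | _ n ih =>
    have hp1 : (1:ℝ) < p := Nat.one_lt_cast.mpr (Fact.out (p := p.Prime)).one_lt
    have key : ∀ j : ℕ, ‖a n‖ ≤ ((p:ℝ))⁻¹ ^ (j+1) := by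
      intro j
      set x : ℤ_[p] := (p : ℤ_[p]) ^ (j+1) with hxdef
      have hxnorm : ‖x‖ = ((p:ℝ))⁻¹ ^ (j+1) := by
        rw [hxdef, norm_pow, PadicInt.norm_p, inv_pow]
      have hxlt : ‖x‖ < 1 := by
        rw [hxnorm]
        exact pow_lt_one₀ (by positivity) (inv_lt_one_of_one_lt₀ hp1) (by omega)
      have hxne : x ≠ 0 := pow_ne_zero _ (NeZero.ne _)
      have h0 := h x hxlt
      rw [padic_tsum_split a hxlt n] at h0
      have hzero : ∑ i ∈ range n, a i * x ^ i = 0 :=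
        Finset.sum_eq_zero fun i hi => by rw [ih i (Finset.mem_range.mp hi), zero_mul]
      rw [hzero, zero_add, padic_tsum_split (fun m => a (m + n)) hxlt 1] at h0
      have hA : a n + x * ∑' m, a (m + 1 + n) * x ^ m = 0 := by
        rcases mul_eq_zero.mp h0 with h' | h'
        · exact absurd h' (pow_ne_zero _ hxne)
        · simpa using h'
      have han : a n = -(x * ∑' m, a (m + 1 + n) * x ^ m) := eq_neg_of_add_eq_zero_left hA
      calc ‖a n‖ = ‖x‖ * ‖∑' m, a (m + 1 + n) * x ^ m‖ := by
            rw [han, norm_neg, norm_mul]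
        _ ≤ ((p:ℝ))⁻¹ ^ (j+1) * 1 := by
            rw [hxnorm]; gcongr; exact PadicInt.norm_le_one _
        _ = ((p:ℝ))⁻¹ ^ (j+1) := mul_one _
    have hten : Tendsto (fun j : ℕ => ((p:ℝ))⁻¹ ^ (j+1)) atTop (nhds 0) :=
      (tendsto_pow_atTop_nhds_zero_of_lt_one (by positivity)
        (inv_lt_one_of_one_lt₀ hp1)).comp (tendsto_add_atTop_nat 1)
    have : ‖a n‖ ≤ 0 := ge_of_tendsto hten (Eventually.of_forall key)
    simpa using le_antisymm this (norm_nonneg _)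

lemma padic_tsum_shift (a : ℕ → ℤ_[p]) {y t : ℤ_[p]} (hy : ‖y‖ < 1) (ht : ‖t‖ < 1) :
    ∑' m, a m * (y + t) ^ m
      = ∑' n, (∑' j, a (j + n) * ((j + n).choose n : ℤ_[p]) * y ^ j) * t ^ n := by
  classical
  set g : ℕ × ℕ → ℤ_[p] :=
    fun mk => a mk.1 * ((mk.1).choose mk.2 : ℤ_[p]) * y ^ (mk.1 - mk.2) * t ^ mk.2 with hg
  set r : ℝ := max ‖y‖ ‖t‖ with hr
  have hr0 : 0 ≤ r := le_max_of_le_left (norm_nonneg _)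
  have hr1 : r < 1 := max_lt hy ht
  set s : ℝ := Real.sqrt r with hs
  have hs0 : 0 ≤ s := Real.sqrt_nonneg _
  have hs1 : s < 1 := by
    rw [hs, show (1:ℝ) = Real.sqrt 1 by simp]
    exact Real.sqrt_lt_sqrt hr0 hr1
  have hss : s * s = r := Real.mul_self_sqrt hr0
  have hbound : ∀ mk : ℕ × ℕ, ‖g mk‖ ≤ s ^ mk.1 * s ^ mk.2 := by
    rintro ⟨m, k⟩
    by_cases hkm : k ≤ m
    · have h1 : ‖g (m, k)‖ ≤ ‖y‖ ^ (m - k) * ‖t‖ ^ k := by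
        simp only [hg, norm_mul, norm_pow]
        have := mul_le_one₀ (PadicInt.norm_le_one (a m)) (norm_nonneg _)
          (PadicInt.norm_le_one (((m).choose k : ℤ_[p])))
        calc ‖a m‖ * ‖((m).choose k : ℤ_[p])‖ * ‖y‖ ^ (m - k) * ‖t‖ ^ k
            ≤ 1 * ‖y‖ ^ (m - k) * ‖t‖ ^ k := by gcongr
          _ = ‖y‖ ^ (m - k) * ‖t‖ ^ k := by ring
      have h2 : ‖y‖ ^ (m - k) * ‖t‖ ^ k ≤ r ^ (m - k) * r ^ k := by
        gcongr <;> [exact le_max_left _ _; exact le_max_right _ _]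
      have h3 : r ^ (m - k) * r ^ k = r ^ m := by
        rw [← pow_add]; congr 1; omega
      have h4 : r ^ m ≤ s ^ m * s ^ k := by
        have : r ^ m = s ^ m * s ^ m := by rw [← hss, mul_pow]
        rw [this]
        exact mul_le_mul_of_nonneg_left (pow_le_pow_of_le_one hs0 hs1.le hkm)
          (pow_nonneg hs0 m)
      exact h1.trans (h2.trans (h3 ▸ h4))
    · have : g (m, k) = 0 := by
        simp [hg, Nat.choose_eq_zero_of_lt (by omega : m < k)]
      rw [this, norm_zero]
      positivity
  have hsum : Summable g :=
    Summable.of_norm_bounded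
      ((summable_geometric_of_lt_one hs0 hs1).mul_of_nonneg
        (summable_geometric_of_lt_one hs0 hs1)
        (fun n => pow_nonneg hs0 n) (fun n => pow_nonneg hs0 n)) hbound
  -- LHS
  have hL : ∑' mk : ℕ × ℕ, g mk = ∑' m, a m * (y + t) ^ m := by
    rw [Summable.tsum_prod' hsum (fun m => hsum.prod_factor m)]
    refine tsum_congr fun m => ?_
    have hfin : ∑' k, g (m, k) = ∑ k ∈ range (m + 1), g (m, k) := by
      refine tsum_eq_sum fun k hk => ?_
      have : m < k := by simpa using hk
      simp [hg, Nat.choose_eq_zero_of_lt this]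
    rw [hfin]
    have := (Commute.all t y).add_pow m
    calc ∑ k ∈ range (m + 1), g (m, k)
        = a m * ∑ k ∈ range (m + 1), t ^ k * y ^ (m - k) * ((m).choose k : ℤ_[p]) := by
          rw [Finset.mul_sum]
          exact Finset.sum_congr rfl fun k _ => by simp [hg]; ring
      _ = a m * (t + y) ^ m := by rw [← this]
      _ = a m * (y + t) ^ m := by rw [add_comm t y]
  -- RHS
  have hR : ∑' mk : ℕ × ℕ, g mk
      = ∑' n, (∑' j, a (j + n) * ((j + n).choose n : ℤ_[p]) * y ^ j) * t ^ n := by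
    rw [← (Equiv.prodComm ℕ ℕ).tsum_eq g]
    have hsum2 : Summable (g ∘ (Equiv.prodComm ℕ ℕ)) := hsum.comp_injective (Equiv.injective _)
    have hsum2' : Summable (fun km : ℕ × ℕ => g (km.2, km.1)) := hsum2
    show ∑' km : ℕ × ℕ, g (km.2, km.1) = _
    rw [Summable.tsum_prod' hsum2' (fun n => hsum2'.prod_factor n)]
    refine tsum_congr fun n => ?_
    have hsumn : Summable (fun m => g (m, n)) :=
      hsum.comp_injective (fun m₁ m₂ h' => by simpa using (Prod.ext_iff.mp h').1)
    rw [← Summable.sum_add_tsum_nat_add n hsumn]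
    have hz : ∑ m ∈ range n, g (m, n) = 0 :=
      Finset.sum_eq_zero fun m hm => by
        simp [hg, Nat.choose_eq_zero_of_lt (Finset.mem_range.mp hm)]
    rw [hz, zero_add]
    have hterm : ∀ j : ℕ, g (j + n, n) = a (j + n) * ((j + n).choose n : ℤ_[p]) * y ^ j * t ^ n :=
      fun j => by simp [hg]
    calc ∑' j, g (j + n, n)
        = ∑' j, (a (j + n) * ((j + n).choose n : ℤ_[p]) * y ^ j) * t ^ n := by
          exact tsum_congr fun j => by rw [hterm j]
      _ = (∑' j, a (j + n) * ((j + n).choose n : ℤ_[p]) * y ^ j) * t ^ n := by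
          exact Summable.tsum_mul_right _
            (padic_summable_aux (fun j => a (j + n) * ((j + n).choose n : ℤ_[p])) hy)
  rw [← hL, hR]
/-- A nonzero power series `F ∈ ℤ_p[[T]]` has only finitely many zeros in the
maximal ideal `p ℤ_p` (evaluation via the convergent series `∑ a_n x^n`). -/
theorem finite_zeros_of_powerSeries (p : ℕ) [Fact p.Prime]
    (F : PowerSeries ℤ_[p]) (hF : F ≠ 0) :
    {x : ℤ_[p] | (p : ℤ_[p]) ∣ x ∧
        ∑' n : ℕ, PowerSeries.coeff n F * x ^ n = 0}.Finite := by
  classical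
  set a : ℕ → ℤ_[p] := fun n => PowerSeries.coeff n F with ha
  set S := {x : ℤ_[p] | (p : ℤ_[p]) ∣ x ∧ ∑' n : ℕ, a n * x ^ n = 0} with hS
  rw [← Set.not_infinite]
  intro hinf
  obtain ⟨x0, hacc⟩ := hinf.exists_accPt_principal
  have hp1 : (1:ℝ) < p := Nat.one_lt_cast.mpr (Fact.out (p := p.Prime)).one_lt
  have hdvd_norm : ∀ x : ℤ_[p], (p:ℤ_[p]) ∣ x ↔ ‖x‖ ≤ (p:ℝ)⁻¹ := by
    intro x
    rw [show ((p:ℝ))⁻¹ = (p:ℝ) ^ (-(1:ℕ) : ℤ) by simp,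
      PadicInt.norm_le_pow_iff_mem_span_pow x 1, pow_one, Ideal.mem_span_singleton]
  -- x0 lies in the closed ball
  have hx0norm : ‖x0‖ ≤ (p:ℝ)⁻¹ := by
    have hclosed : IsClosed {x : ℤ_[p] | ‖x‖ ≤ (p:ℝ)⁻¹} :=
      isClosed_le continuous_norm continuous_const
    have hsub : S ⊆ {x : ℤ_[p] | ‖x‖ ≤ (p:ℝ)⁻¹} := fun x hx => (hdvd_norm x).mp hx.1
    have hx0cl : x0 ∈ closure S :=
      mem_closure_iff_clusterPt.mpr (hacc.clusterPt)
    exact hclosed.closure_subset_iff.mpr hsub hx0cl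
  have hx0lt : ‖x0‖ < 1 := lt_of_le_of_lt hx0norm (inv_lt_one_of_one_lt₀ hp1)
  set c : ℕ → ℤ_[p] :=
    fun n => ∑' j, a (j + n) * ((j + n).choose n : ℤ_[p]) * x0 ^ j with hc
  have hshift : ∀ x : ℤ_[p], ‖x - x0‖ < 1 →
      ∑' n, a n * x ^ n = ∑' n, c n * (x - x0) ^ n := by
    intro x hx
    have := padic_tsum_shift a hx0lt hx
    rw [show x0 + (x - x0) = x by ring] at this
    exact this
  by_cases hcz : ∀ n, c n = 0
  · -- all shifted coefficients vanish: F = 0, contradiction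
    have hzero : ∀ x : ℤ_[p], ‖x‖ < 1 → ∑' n, a n * x ^ n = 0 := by
      intro x hx
      have ht : ‖x - x0‖ < 1 := by
        calc ‖x - x0‖ = ‖x + -x0‖ := by rw [sub_eq_add_neg]
          _ ≤ max ‖x‖ ‖-x0‖ := PadicInt.nonarchimedean _ _
          _ < 1 := by rw [norm_neg]; exact max_lt hx hx0lt
      rw [hshift x ht]
      simp [hcz]
    exact hF (PowerSeries.ext fun n => by simpa using padic_coeff_eq_zero a hzero n)
  · push_neg at hcz
    set k := Nat.find hcz with hkdef
    have hk : c k ≠ 0 := Nat.find_spec hcz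
    have hmin : ∀ i < k, c i = 0 := fun i hi => not_not.mp (Nat.find_min hcz hi)
    have hck : 0 < ‖c k‖ := norm_pos_iff.mpr hk
    obtain ⟨y, ⟨hyU, hyS⟩, hyne⟩ :=
      (accPt_iff_nhds (x := x0) (C := S)).mp hacc (Metric.ball x0 ‖c k‖) (Metric.ball_mem_nhds _ hck)
    set t := y - x0 with htdef
    have htne : t ≠ 0 := sub_ne_zero.mpr hyne
    have htlt : ‖t‖ < ‖c k‖ := by
      rw [htdef, ← dist_eq_norm]; exact Metric.mem_ball.mp hyU
    have ht1 : ‖t‖ < 1 := lt_of_lt_of_le htlt (PadicInt.norm_le_one _)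
    have h0 : ∑' n, c n * t ^ n = 0 := by rw [← hshift y ht1]; exact hyS.2
    rw [padic_tsum_split c ht1 k] at h0
    have hz : ∑ i ∈ Finset.range k, c i * t ^ i = 0 :=
      Finset.sum_eq_zero fun i hi => by rw [hmin i (Finset.mem_range.mp hi), zero_mul]
    rw [hz, zero_add, padic_tsum_split (fun n => c (n + k)) ht1 1] at h0
    have hA : c k + t * ∑' n, c (n + 1 + k) * t ^ n = 0 := by
      rcases mul_eq_zero.mp h0 with h' | h'
      · exact absurd h' (pow_ne_zero _ htne)
      · simpa using h'
    have : ‖c k‖ ≤ ‖t‖ := by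
      have : c k = -(t * ∑' n, c (n + 1 + k) * t ^ n) := eq_neg_of_add_eq_zero_left hA
      calc ‖c k‖ = ‖t‖ * ‖∑' n, c (n + 1 + k) * t ^ n‖ := by
            rw [this, norm_neg, norm_mul]
        _ ≤ ‖t‖ * 1 := by gcongr; exact PadicInt.norm_le_one _
        _ = ‖t‖ := mul_one _
    exact absurd htlt (not_lt.mpr this)
end
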